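/- Assume α_i ∈ (0,1] and ω_i + δ'_i > 0 for every i. Let P ⊆ {1,…,n}×{1,…,n} and suppose ρ(N_{−P}) < 1, where N_{−P} = I − D + A·S0·B_{−P}. Then for the SDIR dynamics run with B replaced by B_{−P}, the infection amount satisfies sup_{t≥0} ‖m(t) − m(0)‖₁ ≥ σ^L(P) = 1ᵀ·A^{−1}·(D·(I − N_{−P})^{−1} − I)·(x(0) + W·(W + D')^{−1}·y(0)). (Theorem 3: supermodular lower bound on the infection amount after deleting the edge set P.) -/

import Mathlib

/-!
Summing the SDIR equations gives `m(t + 1) = m(t) + S₀ B₋ₚ x(t)`. Dropping the new infections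
`(I - A) S₀ B₋ₚ x` that feed `y` leaves a nonnegative linear system whose `x`-component stays
below the true `x` and whose `y`-component decays like `(I - W - D')ᵗ y(0)`. Along it the
potential `x + W (W + D')⁻¹ y` drops by exactly `(I - N₋ₚ) x` per step. Since `ρ(N₋ₚ) < 1`,
Gelfand's formula makes `∑ N₋ₚᵗ = (I - N₋ₚ)⁻¹` converge, so this inverse is entrywise
nonnegative and the partial sums of the lower `x` tend to
`(I - N₋ₚ)⁻¹ (x(0) + W (W + D')⁻¹ y(0))`. Applying `1ᵀ S₀ B₋ₚ` gives `σᴸ(P)`, because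
`A⁻¹ (D (I - N₋ₚ)⁻¹ - I) = S₀ B₋ₚ (I - N₋ₚ)⁻¹`.
-/

open Matrix Filter Finset

/-- Spectral radius of a real square matrix: the maximum modulus of its complex
eigenvalues (elements of the spectrum of the matrix viewed over `ℂ`). -/
noncomputable def specRad {n : ℕ} (M : Matrix (Fin n) (Fin n) ℝ) : ℝ :=
  sSup {r : ℝ | ∃ μ : ℂ, μ ∈ spectrum ℂ (M.map (Complex.ofReal)) ∧ r = ‖μ‖}

/-- The matrix `B` with the entries indexed by the edge set `P` deleted (set to `0`). -/
def Bdel {n : ℕ} (B : Matrix (Fin n) (Fin n) ℝ) (P : Finset (Fin n × Fin n)) :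
    Matrix (Fin n) (Fin n) ℝ :=
  Matrix.of fun i j => if (i, j) ∈ P then 0 else B i j

/-- The lower-bound set function
`σᴸ(P) = 1ᵀ·A⁻¹·(D·(I − N₋ₚ)⁻¹ − I)·(x0 + W·(W + D')⁻¹·y0)`. -/
noncomputable def sigmaL {n : ℕ} (α ω δ δ' s x0 y0 : Fin n → ℝ)
    (B : Matrix (Fin n) (Fin n) ℝ) (P : Finset (Fin n × Fin n)) : ℝ :=
  (fun _ => (1 : ℝ)) ⬝ᵥ
    ((Matrix.diagonal α)⁻¹ *
      (Matrix.diagonal δ *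
        (1 - (1 - Matrix.diagonal δ +
          Matrix.diagonal α * Matrix.diagonal s * Bdel B P))⁻¹ - 1)) *ᵥ
      (x0 + (Matrix.diagonal ω * (Matrix.diagonal ω + Matrix.diagonal δ')⁻¹) *ᵥ y0)

open Topology

section NonnegMatrix

variable {ι R : Type*} [Semiring R] [PartialOrder R] [IsOrderedRing R]

lemma mulVec_nonneg_of_nonneg [Fintype ι] {M : Matrix ι ι R} (hM : ∀ i j, 0 ≤ M i j)
    {v : ι → R} (hv : 0 ≤ v) : 0 ≤ M *ᵥ v :=
  fun i => dotProduct_nonneg_of_nonneg (fun j => hM i j) hv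

lemma mulVec_mono_of_nonneg [Fintype ι] {M : Matrix ι ι R} (hM : ∀ i j, 0 ≤ M i j)
    {v w : ι → R} (h : v ≤ w) : M *ᵥ v ≤ M *ᵥ w :=
  fun i => dotProduct_le_dotProduct_of_nonneg_left h fun j => hM i j

lemma diagonal_mul_apply_nonneg [Fintype ι] [DecidableEq ι] {d : ι → R} (hd : 0 ≤ d)
    {M : Matrix ι ι R} (hM : ∀ i j, 0 ≤ M i j) (i j : ι) : 0 ≤ (diagonal d * M) i j := by
  rw [diagonal_mul]
  exact mul_nonneg (hd i) (hM i j)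

end NonnegMatrix

section Diagonal

variable {ι : Type*} [DecidableEq ι]

lemma one_sub_diagonal {R : Type*} [Ring R] (d : ι → R) : 1 - diagonal d = diagonal (1 - d) := by
  rw [← diagonal_one, diagonal_sub]
  rfl

lemma one_sub_diagonal_sub_diagonal {R : Type*} [Ring R] (a b : ι → R) :
    1 - diagonal a - diagonal b = diagonal (1 - a - b) := by
  rw [one_sub_diagonal, diagonal_sub]
  rfl

lemma diagonal_apply_nonneg {R : Type*} [Zero R] [Preorder R] {d : ι → R} (hd : 0 ≤ d)
    (i j : ι) : 0 ≤ diagonal d i j := by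
  rw [diagonal_apply]
  split_ifs
  · exact hd i
  · exact le_rfl

variable [Fintype ι]

lemma inv_diagonal_of_ne_zero {K : Type*} [Field K] {v : ι → K} (hv : ∀ i, v i ≠ 0) :
    (diagonal v)⁻¹ = diagonal v⁻¹ :=
  inv_eq_right_inv (by rw [diagonal_mul_diagonal, ← diagonal_one]; congr; ext i; simp [hv i])

lemma tendsto_diagonal_pow_nhds_zero {μ : ι → ℝ} (h0 : 0 ≤ μ) (h1 : ∀ i, μ i < 1) :
    Tendsto (fun t : ℕ => diagonal μ ^ t) atTop (𝓝 0) := by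
  simp_rw [diagonal_pow, ← diagonal_zero]
  refine (continuous_id.matrix_diagonal).tendsto _ |>.comp ?_
  exact tendsto_pi_nhds.mpr fun i => by
    simpa using tendsto_pow_atTop_nhds_zero_of_lt_one (h0 i) (h1 i)

end Diagonal

section SpectralRadius

attribute [local instance] Matrix.linftyOpNormedRing Matrix.linftyOpNormedAlgebra

variable {n : ℕ}

lemma spectralRadius_map_ofReal_le_specRad (N : Matrix (Fin n) (Fin n) ℝ) :
    spectralRadius ℂ (N.map Complex.ofReal) ≤ ENNReal.ofReal (specRad N) := by
  have : CompleteSpace (Matrix (Fin n) (Fin n) ℂ) := FiniteDimensional.complete ℂ _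
  have hbdd : BddAbove {r : ℝ | ∃ μ : ℂ, μ ∈ spectrum ℂ (N.map Complex.ofReal) ∧ r = ‖μ‖} :=
    ⟨_, by rintro _ ⟨μ, hμ, rfl⟩; exact spectrum.norm_le_norm_mul_of_mem hμ⟩
  refine iSup₂_le fun μ hμ => ?_
  rw [← ENNReal.ofReal_coe_nnreal, coe_nnnorm]
  exact ENNReal.ofReal_le_ofReal (le_csSup hbdd ⟨μ, hμ, rfl⟩)

lemma norm_pow_map_ofReal (N : Matrix (Fin n) (Fin n) ℝ) (t : ℕ) :
    ‖N.map Complex.ofReal ^ t‖ = ‖N ^ t‖ := by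
  change ‖(Complex.ofRealHom.mapMatrix N) ^ t‖ = _
  rw [← map_pow]
  simp [Matrix.linfty_opNorm_def]

lemma summable_pow_of_specRad_lt_one (N : Matrix (Fin n) (Fin n) ℝ) (h : specRad N < 1) :
    Summable (fun t : ℕ => N ^ t) := by
  have : CompleteSpace (Matrix (Fin n) (Fin n) ℂ) := FiniteDimensional.complete ℂ _
  have : CompleteSpace (Matrix (Fin n) (Fin n) ℝ) := FiniteDimensional.complete ℝ _
  have hlt : spectralRadius ℂ (N.map Complex.ofReal) < 1 :=
    (spectralRadius_map_ofReal_le_specRad N).trans_lt (ENNReal.ofReal_lt_one.mpr h)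
  set ρ := (spectralRadius ℂ (N.map Complex.ofReal)).toReal
  have hρ : ρ < 1 := by
    simpa using (ENNReal.toReal_lt_toReal hlt.ne_top ENNReal.one_ne_top).mpr hlt
  have gelfand : Tendsto (fun t : ℕ => ‖N ^ t‖ ^ (1 / t : ℝ)) atTop (𝓝 ρ) := by
    have := (ENNReal.tendsto_toReal hlt.ne_top).comp
      (spectrum.pow_norm_pow_one_div_tendsto_nhds_spectralRadius (N.map Complex.ofReal))
    simpa [Function.comp_def, norm_pow_map_ofReal, Real.rpow_nonneg] using this
  obtain ⟨r, hρr, hr1⟩ := exists_between hρ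
  have hr0 : 0 ≤ r := (ENNReal.toReal_nonneg).trans hρr.le
  refine .of_norm_bounded_eventually_nat (summable_geometric_of_lt_one hr0 hr1) ?_
  filter_upwards [gelfand.eventually (gt_mem_nhds hρr), eventually_ge_atTop 1] with t ht ht1
  rw [one_div] at ht
  calc ‖N ^ t‖ = (‖N ^ t‖ ^ (t⁻¹ : ℝ)) ^ t :=
        (Real.rpow_inv_natCast_pow (norm_nonneg _) (by omega)).symm
    _ ≤ r ^ t := pow_le_pow_left₀ (by positivity) ht.le t

end SpectralRadius

section NeumannSeries

variable {n : ℕ} {N : Matrix (Fin n) (Fin n) ℝ}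

lemma hasSum_pow_inv_one_sub (h : specRad N < 1) : HasSum (fun t : ℕ => N ^ t) (1 - N)⁻¹ := by
  have hsum := summable_pow_of_specRad_lt_one N h
  rw [inv_eq_left_inv hsum.tsum_pow_mul_one_sub]
  exact hsum.hasSum

lemma isUnit_det_one_sub_of_specRad_lt_one (h : specRad N < 1) : IsUnit (1 - N).det :=
  isUnit_det_of_left_inverse (summable_pow_of_specRad_lt_one N h).tsum_pow_mul_one_sub

lemma inv_one_sub_apply_nonneg (hN : ∀ i j, 0 ≤ N i j) (h : specRad N < 1) (i j : Fin n) :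
    0 ≤ (1 - N)⁻¹ i j :=
  (Pi.hasSum.mp (Pi.hasSum.mp (hasSum_pow_inv_one_sub h) i) j).nonneg
    fun t => pow_apply_nonneg hN t i j

end NeumannSeries

section LowerSystem

variable {ι : Type*} [Fintype ι]

/-- The SDIR step on `(x, y)` with the new infections `(I - A) S₀ B x` entering `y` dropped;
`M` stands for `I - W - D'`. -/
def sdirLowerStep (N W M : Matrix ι ι ℝ) (p : (ι → ℝ) × (ι → ℝ)) : (ι → ℝ) × (ι → ℝ) :=
  (N *ᵥ p.1 + W *ᵥ p.2, M *ᵥ p.2)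

variable {N W M : Matrix ι ι ℝ}

lemma sdirLowerStep_mono (hN : ∀ i j, 0 ≤ N i j) (hW : ∀ i j, 0 ≤ W i j)
    (hM : ∀ i j, 0 ≤ M i j) : Monotone (sdirLowerStep N W M) := fun _ _ hpq =>
  ⟨add_le_add (mulVec_mono_of_nonneg hN hpq.1) (mulVec_mono_of_nonneg hW hpq.2),
    mulVec_mono_of_nonneg hM hpq.2⟩

lemma iterate_sdirLowerStep_nonneg (hN : ∀ i j, 0 ≤ N i j) (hW : ∀ i j, 0 ≤ W i j)
    (hM : ∀ i j, 0 ≤ M i j) {p : (ι → ℝ) × (ι → ℝ)} (hp : 0 ≤ p) (t : ℕ) :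
    0 ≤ (sdirLowerStep N W M)^[t] p := by
  have hfix : sdirLowerStep N W M 0 = 0 := by simp [sdirLowerStep]
  simpa [Function.iterate_fixed hfix] using
    ((sdirLowerStep_mono hN hW hM).iterate t) hp

lemma iterate_sdirLowerStep_le {R : Matrix ι ι ℝ} (hN : ∀ i j, 0 ≤ N i j)
    (hW : ∀ i j, 0 ≤ W i j) (hM : ∀ i j, 0 ≤ M i j) (hR : ∀ i j, 0 ≤ R i j)
    {x y : ℕ → ι → ℝ} (hx : ∀ t, 0 ≤ x t)
    (hdynx : ∀ t, x (t + 1) = N *ᵥ x t + W *ᵥ y t)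
    (hdyny : ∀ t, y (t + 1) = R *ᵥ x t + M *ᵥ y t) (t : ℕ) :
    (sdirLowerStep N W M)^[t] (x 0, y 0) ≤ (x t, y t) := by
  refine (sdirLowerStep_mono hN hW hM).seq_le_seq (x := fun t => _^[t] (x 0, y 0))
    (y := fun t => (x t, y t)) t le_rfl
    (fun k _ => (Function.iterate_succ_apply' _ k _).le) fun k _ => ⟨(hdynx k).ge, ?_⟩
  rw [hdyny k]
  exact le_add_of_nonneg_left (mulVec_nonneg_of_nonneg hR (hx k))

lemma tendsto_sum_range_of_telescoping {S : Matrix ι ι ℝ} (hS : ∀ i j, 0 ≤ S i j)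
    {ξ ζ : ℕ → ι → ℝ} (hξ : ∀ t, 0 ≤ ξ t) (hζ : ∀ t, 0 ≤ ζ t)
    (htel : ∀ t, ξ t = S *ᵥ (ζ t - ζ (t + 1)))
    (hlim : Tendsto (fun t => ζ t - ξ t) atTop (𝓝 0)) :
    Tendsto (fun T => ∑ t ∈ range T, ξ t) atTop (𝓝 (S *ᵥ ζ 0)) := by
  have hpartial : ∀ T, ∑ t ∈ range T, ξ t = S *ᵥ ζ 0 - S *ᵥ ζ T := fun T => by
    simp_rw [htel, mulVec_sub, sum_range_sub' (fun t => S *ᵥ ζ t)]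
  have hsummable : ∀ i, Summable fun t => ξ t i := fun i =>
    summable_of_sum_range_le (fun t => hξ t i) fun T => by
      have := hpartial T ▸ sub_le_self (S *ᵥ ζ 0) (mulVec_nonneg_of_nonneg hS (hζ T))
      simpa using this i
  have hξ0 : Tendsto ξ atTop (𝓝 0) :=
    tendsto_pi_nhds.mpr fun i => (hsummable i).tendsto_atTop_zero
  have hζ0 : Tendsto ζ atTop (𝓝 0) := by
    simpa using hlim.add hξ0
  have hSζ : Tendsto (fun T => S *ᵥ ζ T) atTop (𝓝 (S *ᵥ 0)) :=
    ((continuous_const.matrix_mulVec continuous_id).tendsto 0).comp hζ0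
  simpa [hpartial] using tendsto_const_nhds.sub hSζ

variable [DecidableEq ι]

lemma iterate_sdirLowerStep_snd (p : (ι → ℝ) × (ι → ℝ)) (t : ℕ) :
    ((sdirLowerStep N W M)^[t] p).2 = M ^ t *ᵥ p.2 := by
  induction t with
  | zero => simp
  | succ t ih =>
    rw [Function.iterate_succ_apply', sdirLowerStep, ih, pow_succ', ← mulVec_mulVec]

lemma sdirLowerStep_potential {K : Matrix ι ι ℝ} (hKM : K * M + W = K)
    (p : (ι → ℝ) × (ι → ℝ)) :
    (sdirLowerStep N W M p).1 + K *ᵥ (sdirLowerStep N W M p).2 =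
      p.1 + K *ᵥ p.2 - (1 - N) *ᵥ p.1 := by
  have hK : K *ᵥ (M *ᵥ p.2) + W *ᵥ p.2 = K *ᵥ p.2 := by
    rw [mulVec_mulVec, ← add_mulVec, hKM]
  simp only [sdirLowerStep, sub_mulVec, one_mulVec]
  rw [← hK]
  abel

theorem tendsto_sum_iterate_sdirLowerStep {K S : Matrix ι ι ℝ} (hN : ∀ i j, 0 ≤ N i j)
    (hW : ∀ i j, 0 ≤ W i j) (hM : ∀ i j, 0 ≤ M i j) (hK : ∀ i j, 0 ≤ K i j)
    (hS : ∀ i j, 0 ≤ S i j) (hSN : S * (1 - N) = 1) (hKM : K * M + W = K)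
    (hMt : Tendsto (fun t : ℕ => M ^ t) atTop (𝓝 0)) {p : (ι → ℝ) × (ι → ℝ)} (hp : 0 ≤ p) :
    Tendsto (fun T => ∑ t ∈ range T, ((sdirLowerStep N W M)^[t] p).1) atTop
      (𝓝 (S *ᵥ (p.1 + K *ᵥ p.2))) := by
  set q := fun t => (sdirLowerStep N W M)^[t] p
  have hq : ∀ t, 0 ≤ q t := iterate_sdirLowerStep_nonneg hN hW hM hp
  refine tendsto_sum_range_of_telescoping (ζ := fun t => (q t).1 + K *ᵥ (q t).2) hS
    (fun t => (hq t).1) (fun t => add_nonneg (hq t).1 (mulVec_nonneg_of_nonneg hK (hq t).2))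
    (fun t => ?_) ?_
  · show (q t).1 = _
    rw [show q (t + 1) = sdirLowerStep N W M (q t) from Function.iterate_succ_apply' _ t p,
      sdirLowerStep_potential hKM, sub_sub_cancel, mulVec_mulVec, hSN, one_mulVec]
  · have hcont : Continuous fun X : Matrix ι ι ℝ => K *ᵥ (X *ᵥ p.2) :=
      continuous_const.matrix_mulVec (continuous_id.matrix_mulVec continuous_const)
    simpa [q, iterate_sdirLowerStep_snd, Function.comp_def] using (hcont.tendsto 0).comp hMt

end LowerSystem

section SDIR

variable {ι : Type*} [Fintype ι] [DecidableEq ι]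

lemma diagonal_mul_diagonal_mul_apply_nonneg {a b : ι → ℝ} (ha : 0 ≤ a) (hb : 0 ≤ b)
    {M : Matrix ι ι ℝ} (hM : ∀ i j, 0 ≤ M i j) (i j : ι) :
    0 ≤ (diagonal a * diagonal b * M) i j := by
  rw [diagonal_mul_diagonal]
  exact diagonal_mul_apply_nonneg (mul_nonneg ha hb) hM i j

lemma mul_inv_mul_one_sub_sub_add_self {R : Type*} [CommRing R] {W D' : Matrix ι ι R}
    (h : IsUnit (W + D').det) : W * (W + D')⁻¹ * (1 - W - D') + W = W * (W + D')⁻¹ := by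
  rw [sub_sub, mul_sub, mul_one, mul_assoc, nonsing_inv_mul _ h, mul_one, sub_add_cancel]

lemma inv_mul_mul_inv_one_sub_sub_one {R : Type*} [CommRing R] {A S B D : Matrix ι ι R}
    (hA : IsUnit A.det) (hN : IsUnit (1 - (1 - D + A * S * B)).det) :
    A⁻¹ * (D * (1 - (1 - D + A * S * B))⁻¹ - 1) = S * B * (1 - (1 - D + A * S * B))⁻¹ := by
  set E := 1 - (1 - D + A * S * B)
  have hDE : D - E = A * S * B := by simp only [E]; abel
  calc A⁻¹ * (D * E⁻¹ - 1) = A⁻¹ * ((D - E) * E⁻¹) := by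
        rw [sub_mul, mul_nonsing_inv _ hN]
    _ = S * B * E⁻¹ := by
        rw [hDE, mul_assoc, mul_assoc, ← mul_assoc A⁻¹, nonsing_inv_mul _ hA, one_mul, mul_assoc]

lemma sdir_mass_sub_mass_zero {A S B D W D' : Matrix ι ι ℝ} {x y r m : ℕ → ι → ℝ}
    (hdynx : ∀ t, x (t + 1) = (1 - D + A * S * B) *ᵥ x t + W *ᵥ y t)
    (hdyny : ∀ t, y (t + 1) = ((1 - A) * S * B) *ᵥ x t + (1 - W - D') *ᵥ y t)
    (hdynr : ∀ t, r (t + 1) = D *ᵥ x t + D' *ᵥ y t + r t)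
    (hm : ∀ t, m t = x t + y t + r t) (T : ℕ) :
    m T - m 0 = ∑ t ∈ range T, (S * B) *ᵥ x t := by
  rw [← sum_range_sub m T]
  refine sum_congr rfl fun t _ => ?_
  rw [hm, hm, hdynx, hdyny, hdynr]
  simp only [sub_mul, one_mul, Matrix.mul_assoc, add_mulVec, sub_mulVec, one_mulVec]
  abel

end SDIR

section SigmaL

lemma bdel_apply_nonneg {n : ℕ} {B : Matrix (Fin n) (Fin n) ℝ} (hB : ∀ i j, 0 ≤ B i j)
    (P : Finset (Fin n × Fin n)) (i j : Fin n) : 0 ≤ Bdel B P i j := by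
  rw [Bdel, of_apply]
  split_ifs
  · exact le_rfl
  · exact hB i j

theorem tendsto_sum_sdirLowerStep_sigmaL {n : ℕ} {α ω δ δ' s : Fin n → ℝ} (hα : ∀ i, 0 < α i)
    (hω : 0 ≤ ω) (hωδ' : ω + δ' ≤ 1) (hωδ'pos : ∀ i, 0 < ω i + δ' i)
    {B : Matrix (Fin n) (Fin n) ℝ} {P : Finset (Fin n × Fin n)}
    (hN : ∀ i j, 0 ≤ (1 - diagonal δ + diagonal α * diagonal s * Bdel B P) i j)
    (hρ : specRad (1 - diagonal δ + diagonal α * diagonal s * Bdel B P) < 1)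
    {x0 y0 : Fin n → ℝ} (hx0 : 0 ≤ x0) (hy0 : 0 ≤ y0) :
    Tendsto (fun T => ∑ i, ((diagonal s * Bdel B P) *ᵥ ∑ t ∈ range T,
      ((sdirLowerStep (1 - diagonal δ + diagonal α * diagonal s * Bdel B P) (diagonal ω)
        (1 - diagonal ω - diagonal δ'))^[t] (x0, y0)).1) i) atTop
      (𝓝 (sigmaL α ω δ δ' s x0 y0 B P)) := by
  have hM := one_sub_diagonal_sub_diagonal ω δ'
  have hM0 : 0 ≤ 1 - ω - δ' := by
    rw [sub_sub]
    exact sub_nonneg.2 hωδ'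
  have hWD' : (diagonal ω + diagonal δ')⁻¹ = diagonal (ω + δ')⁻¹ := by
    rw [diagonal_add, inv_diagonal_of_ne_zero fun i => (hωδ'pos i).ne']
    rfl
  have hWD'unit : IsUnit (diagonal ω + diagonal δ').det := by
    rw [diagonal_add, det_diagonal]
    exact (prod_pos fun i _ => hωδ'pos i).ne'.isUnit
  have hAunit : IsUnit (diagonal α).det := by
    rw [det_diagonal]
    exact (prod_pos fun i _ => hα i).ne'.isUnit
  have hunit := isUnit_det_one_sub_of_specRad_lt_one hρ
  have hlower := tendsto_sum_iterate_sdirLowerStep hN (diagonal_apply_nonneg hω)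
    (hM ▸ diagonal_apply_nonneg hM0)
    (hWD' ▸ diagonal_mul_apply_nonneg hω
      (diagonal_apply_nonneg fun i => inv_nonneg.2 (hωδ'pos i).le))
    (inv_one_sub_apply_nonneg hN hρ) (nonsing_inv_mul _ hunit)
    (mul_inv_mul_one_sub_sub_add_self hWD'unit)
    (hM ▸ tendsto_diagonal_pow_nhds_zero hM0 fun i => by
      simp only [Pi.sub_apply, Pi.one_apply]; linarith [hωδ'pos i])
    (p := (x0, y0)) ⟨hx0, hy0⟩
  have hcont : Continuous fun v : Fin n → ℝ => ∑ i, ((diagonal s * Bdel B P) *ᵥ v) i :=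
    continuous_finsetSum _ fun i _ =>
      (continuous_apply i).comp (continuous_const.matrix_mulVec continuous_id)
  have hσ : sigmaL α ω δ δ' s x0 y0 B P = ∑ i, ((diagonal s * Bdel B P) *ᵥ
      ((1 - (1 - diagonal δ + diagonal α * diagonal s * Bdel B P))⁻¹ *ᵥ
        (x0 + (diagonal ω * (diagonal ω + diagonal δ')⁻¹) *ᵥ y0))) i := by
    rw [sigmaL, inv_mul_mul_inv_one_sub_sub_one hAunit hunit, ← mulVec_mulVec]
    simp [dotProduct]
  rw [hσ]
  exact (hcont.tendsto _).comp hlower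

end SigmaL

theorem sdir_lower_bound_general
    (n : ℕ) (α ω δ δ' s : Fin n → ℝ)
    (hα : ∀ i, 0 < α i ∧ α i ≤ 1) (hω : ∀ i, 0 ≤ ω i ∧ ω i ≤ 1)
    (hδ : ∀ i, 0 ≤ δ i ∧ δ i ≤ 1)
    (hs : ∀ i, 0 ≤ s i ∧ s i ≤ 1) (hωδ' : ∀ i, ω i + δ' i ≤ 1)
    (hωδ'pos : ∀ i, 0 < ω i + δ' i)
    (B : Matrix (Fin n) (Fin n) ℝ) (hB : ∀ i j, 0 ≤ B i j)
    (P : Finset (Fin n × Fin n))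
    (hρ : specRad
      (1 - Matrix.diagonal δ + Matrix.diagonal α * Matrix.diagonal s * Bdel B P) < 1)
    (x y r : ℕ → Fin n → ℝ)
    (hx : ∀ t i, 0 ≤ x t i) (hy : ∀ t i, 0 ≤ y t i)
    (hdynx : ∀ t, x (t + 1) =
      (1 - Matrix.diagonal δ + Matrix.diagonal α * Matrix.diagonal s * Bdel B P) *ᵥ x t +
        Matrix.diagonal ω *ᵥ y t)
    (hdyny : ∀ t, y (t + 1) =
      ((1 - Matrix.diagonal α) * Matrix.diagonal s * Bdel B P) *ᵥ x t +
        (1 - Matrix.diagonal ω - Matrix.diagonal δ') *ᵥ y t)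
    (hdynr : ∀ t, r (t + 1) =
      Matrix.diagonal δ *ᵥ x t + Matrix.diagonal δ' *ᵥ y t + r t)
    (m : ℕ → Fin n → ℝ) (hm : ∀ t, m t = x t + y t + r t) :
    ∀ ε : ℝ, 0 < ε → ∃ t,
      sigmaL α ω δ δ' s (x 0) (y 0) B P - ε < ∑ i, |m t i - m 0 i| := by
  intro ε hε
  have hB' := bdel_apply_nonneg hB P
  have hα0 : 0 ≤ α := fun i => (hα i).1.le
  have hs0 : 0 ≤ s := fun i => (hs i).1
  have hN : ∀ i j, 0 ≤ (1 - diagonal δ + diagonal α * diagonal s * Bdel B P) i j := fun i j =>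
    add_nonneg (one_sub_diagonal δ ▸ diagonal_apply_nonneg (fun k => sub_nonneg.2 (hδ k).2) i j)
      (diagonal_mul_diagonal_mul_apply_nonneg hα0 hs0 hB' i j)
  have hR : ∀ i j, 0 ≤ ((1 - diagonal α) * diagonal s * Bdel B P) i j := one_sub_diagonal α ▸
    diagonal_mul_diagonal_mul_apply_nonneg (fun k => sub_nonneg.2 (hα k).2) hs0 hB'
  have hM : ∀ i j, 0 ≤ (1 - diagonal ω - diagonal δ') i j := by
    rw [one_sub_diagonal_sub_diagonal, sub_sub]
    exact diagonal_apply_nonneg (sub_nonneg.2 hωδ')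
  obtain ⟨T, hT⟩ := ((tendsto_sum_sdirLowerStep_sigmaL (fun i => (hα i).1) (fun i => (hω i).1)
    hωδ' hωδ'pos hN hρ (hx 0) (hy 0)).eventually (lt_mem_nhds (sub_lt_self _ hε))).exists
  refine ⟨T, hT.trans_le ?_⟩
  calc _ ≤ ∑ i, ((diagonal s * Bdel B P) *ᵥ ∑ t ∈ range T, x t) i :=
        sum_le_sum fun i _ => mulVec_mono_of_nonneg (diagonal_mul_apply_nonneg hs0 hB')
          (sum_le_sum fun t _ => (iterate_sdirLowerStep_le hN (diagonal_apply_nonneg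
            fun k => (hω k).1) hM hR (hx ·) hdynx hdyny t).1) i
    _ = ∑ i, (m T - m 0) i := by rw [sdir_mass_sub_mass_zero hdynx hdyny hdynr hm, mulVec_sum]
    _ ≤ ∑ i, |m T i - m 0 i| := sum_le_sum fun i _ => le_abs_self _

/-- Theorem 3: supermodular lower bound on the infection amount after deleting
the edge set `P`:  `sup_t ‖m(t) − m(0)‖₁ ≥ σᴸ(P)`, stated in the equivalent
`ε`-form for the (possibly infinite) supremum. -/
theorem sdir_lower_bound
    (n : ℕ) (hn : 1 ≤ n) (α ω δ δ' s : Fin n → ℝ)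
    (hα : ∀ i, 0 < α i ∧ α i ≤ 1) (hω : ∀ i, 0 ≤ ω i ∧ ω i ≤ 1)
    (hδ : ∀ i, 0 ≤ δ i ∧ δ i ≤ 1) (hδ' : ∀ i, 0 ≤ δ' i ∧ δ' i ≤ 1)
    (hs : ∀ i, 0 ≤ s i ∧ s i ≤ 1) (hωδ' : ∀ i, ω i + δ' i ≤ 1)
    (hωδ'pos : ∀ i, 0 < ω i + δ' i)
    (B : Matrix (Fin n) (Fin n) ℝ) (hB : ∀ i j, 0 ≤ B i j)
    (P : Finset (Fin n × Fin n))
    (hρ : specRad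
      (1 - Matrix.diagonal δ + Matrix.diagonal α * Matrix.diagonal s * Bdel B P) < 1)
    (x y r : ℕ → Fin n → ℝ)
    (hx : ∀ t i, 0 ≤ x t i) (hy : ∀ t i, 0 ≤ y t i) (hr : ∀ t i, 0 ≤ r t i)
    (hdynx : ∀ t, x (t + 1) =
      (1 - Matrix.diagonal δ + Matrix.diagonal α * Matrix.diagonal s * Bdel B P) *ᵥ x t +
        Matrix.diagonal ω *ᵥ y t)
    (hdyny : ∀ t, y (t + 1) =
      ((1 - Matrix.diagonal α) * Matrix.diagonal s * Bdel B P) *ᵥ x t +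
        (1 - Matrix.diagonal ω - Matrix.diagonal δ') *ᵥ y t)
    (hdynr : ∀ t, r (t + 1) =
      Matrix.diagonal δ *ᵥ x t + Matrix.diagonal δ' *ᵥ y t + r t)
    (m : ℕ → Fin n → ℝ) (hm : ∀ t, m t = x t + y t + r t) :
    ∀ ε : ℝ, 0 < ε → ∃ t,
      sigmaL α ω δ δ' s (x 0) (y 0) B P - ε < ∑ i, |m t i - m 0 i| :=
  sdir_lower_bound_general n α ω δ δ' s hα hω hδ hs hωδ' hωδ'pos B hB P hρ x y r hx hy hdynx hdyny
    hdynr m hm
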